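/- arXiv:1809.09495 — 2 statements merged into one kernel-verified Lean document; each statement's English description precedes it below -/
import Mathlib

section
/- The minimal contingency logic K^Δ (= R^Δ plus ΔN) is strongly complete with respect to the class of filters: every K^Δ-consistent set of formulas is satisfiable at some state of some neighborhood model whose neighborhood function at every state is closed under supersets, closed under binary intersections, and contains the unit S. Likewise, EMN^Δ (= M^Δ plus ΔN) is strongly complete with respect to the class of (mn)-frames. -/
/-- The language L(Δ) of contingency logic: φ ::= p | ¬φ | (φ ∧ φ) | Δφ. -/
inductive Formula (P : Type) : Type
  | atom : P → Formula P
  | neg : Formula P → Formula P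
  | and : Formula P → Formula P → Formula P
  | delta : Formula P → Formula P

namespace Formula

variable {P : Type}

/-- φ ∨ ψ abbreviates ¬(¬φ ∧ ¬ψ). -/
def or (φ ψ : Formula P) : Formula P := neg (and (neg φ) (neg ψ))

/-- φ → ψ abbreviates ¬(φ ∧ ¬ψ). -/
def imp (φ ψ : Formula P) : Formula P := neg (and φ (neg ψ))

/-- φ ↔ ψ abbreviates (φ → ψ) ∧ (ψ → φ). -/
def iffF (φ ψ : Formula P) : Formula P := and (imp φ ψ) (imp ψ φ)

end Formula

/-- ⊤ : a fixed tautology (p ∨ ¬p for a fixed propositional variable p). -/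
noncomputable def Formula.top (P : Type) [Nonempty P] : Formula P :=
  Formula.or (Formula.atom (Classical.arbitrary P))
    (Formula.neg (Formula.atom (Classical.arbitrary P)))

/-- A neighborhood model ⟨S, N, V⟩: a nonempty set of states `S`, a neighborhood
function `N : S → P(P(S))` and a valuation `V`. -/
structure NbhdModel (P : Type) where
  S : Type
  nonempty : Nonempty S
  N : S → Set (Set S)
  V : P → Set S

/-- The truth set ⟦φ⟧ of a formula in a neighborhood model; the clause for `Δφ` says
that a state `s` satisfies `Δφ` iff ⟦φ⟧ ∈ N(s) or S ∖ ⟦φ⟧ ∈ N(s). -/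
def NbhdModel.truthSet {P : Type} (M : NbhdModel P) : Formula P → Set M.S
  | .atom p => M.V p
  | .neg φ => (M.truthSet φ)ᶜ
  | .and φ ψ => M.truthSet φ ∩ M.truthSet ψ
  | .delta φ => {s | M.truthSet φ ∈ M.N s ∨ (M.truthSet φ)ᶜ ∈ M.N s}

/-- Satisfaction: M,s ⊨ φ. -/
def NbhdModel.sat {P : Type} (M : NbhdModel P) (s : M.S) (φ : Formula P) : Prop :=
  s ∈ M.truthSet φ

/-- Frame property (m): closure under supersets. -/
def SupersetClosed {S : Type} (N : S → Set (Set S)) : Prop :=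
  ∀ s : S, ∀ X Y : Set S, X ∈ N s → X ⊆ Y → Y ∈ N s

/-- Frame property (c): closure under binary intersections. -/
def InterClosed {S : Type} (N : S → Set (Set S)) : Prop :=
  ∀ s : S, ∀ X Y : Set S, X ∈ N s → Y ∈ N s → X ∩ Y ∈ N s

/-- Frame property (n): contains the unit. -/
def ContainsUnit {S : Type} (N : S → Set (Set S)) : Prop :=
  ∀ s : S, (Set.univ : Set S) ∈ N s

/-- Frame property (z): closure under complements. -/
def ComplClosed {S : Type} (N : S → Set (Set S)) : Prop :=
  ∀ s : S, ∀ X : Set S, X ∈ N s → Xᶜ ∈ N s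

/-- The supplementation of a neighborhood function:
`N⁺(s) = {X ⊆ S : Y ⊆ X for some Y ∈ N(s)}`. -/
def suppN {S : Type} (N : S → Set (Set S)) (s : S) : Set (Set S) :=
  {X | ∃ Y ∈ N s, Y ⊆ X}

/-- `φ` is a substitution instance of a propositional tautology: every Boolean valuation
of formulas that respects `¬` and `∧` (treating atoms and Δ-formulas as atomic) makes
`φ` true. -/
def Tautology {P : Type} (φ : Formula P) : Prop :=
  ∀ v : Formula P → Bool,
    (∀ ψ, v (Formula.neg ψ) = !(v ψ)) →
    (∀ ψ χ, v (Formula.and ψ χ) = (v ψ && v χ)) →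
    v φ = true

/-- Derivability in the system E^Δ (TAUT + ΔEqu + MP + REΔ) extended with the
additional axioms in `Ax`. -/
inductive Deriv {P : Type} (Ax : Set (Formula P)) : Formula P → Prop
  | ax {φ} (h : φ ∈ Ax) : Deriv Ax φ
  | taut {φ} (h : Tautology φ) : Deriv Ax φ
  | equ (φ) : Deriv Ax (Formula.iffF (Formula.delta φ) (Formula.delta (Formula.neg φ)))
  | mp {φ ψ} (h1 : Deriv Ax (Formula.imp φ ψ)) (h2 : Deriv Ax φ) : Deriv Ax ψ
  | re {φ ψ} (h : Deriv Ax (Formula.iffF φ ψ)) :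
      Deriv Ax (Formula.iffF (Formula.delta φ) (Formula.delta ψ))

/-- Derivability of `φ` from the set of premises `Γ` in the system E^Δ + `Ax`. -/
inductive DerivFrom {P : Type} (Ax Γ : Set (Formula P)) : Formula P → Prop
  | mem {φ} (h : φ ∈ Γ) : DerivFrom Ax Γ φ
  | thm {φ} (h : Deriv Ax φ) : DerivFrom Ax Γ φ
  | mp {φ ψ} (h1 : DerivFrom Ax Γ (Formula.imp φ ψ)) (h2 : DerivFrom Ax Γ φ) :
      DerivFrom Ax Γ ψ

/-- `Γ` is consistent in the system E^Δ + `Ax`: no contradiction is derivable from `Γ`. -/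
def Consistent {P : Type} (Ax Γ : Set (Formula P)) : Prop :=
  ¬ ∃ φ : Formula P, DerivFrom Ax Γ φ ∧ DerivFrom Ax Γ (Formula.neg φ)

/-- The axiom ΔM: all instances of Δφ → Δ(φ ∨ ψ) ∨ Δ(¬φ ∨ χ). -/
def AxDeltaM {P : Type} : Set (Formula P) :=
  {f | ∃ φ ψ χ : Formula P,
     f = Formula.imp (Formula.delta φ)
           (Formula.or (Formula.delta (Formula.or φ ψ))
                       (Formula.delta (Formula.or (Formula.neg φ) χ)))}

/-- The axiom ΔC: all instances of (Δφ ∧ Δψ) → Δ(φ ∧ ψ). -/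
def AxDeltaC {P : Type} : Set (Formula P) :=
  {f | ∃ φ ψ : Formula P,
     f = Formula.imp (Formula.and (Formula.delta φ) (Formula.delta ψ))
           (Formula.delta (Formula.and φ ψ))}

/-- The axiom ΔN: Δ⊤. -/
noncomputable def AxDeltaN (P : Type) [Nonempty P] : Set (Formula P) :=
  {Formula.delta (Formula.top P)}

/-!
Canonical-model argument. The contingency operator does not define a box, so the neighbourhoods
of a maximal consistent set `s` are generated by the proof sets of the formulas that are
"necessary at `s`": those `φ` with `Δ(φ ∨ ψ) ∈ s` for every `ψ`. By ΔM, `Δφ ∈ s` holds exactly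
when `φ` or `¬φ` is necessary at `s`, which is the `Δ` case of the truth lemma. Taking the
supplementation makes the frame monotone, ΔN makes `⊤` necessary everywhere, and ΔC makes
necessity closed under conjunction, so the neighbourhoods are filters.
-/

section

open Formula Set

variable {P : Type}

namespace Tautology

theorem imp_intro (a b : Formula P) : Tautology (imp a (imp b a)) := by
  intro v hn ha; simp only [imp, hn, ha]; cases v a <;> cases v b <;> rfl

theorem imp_distrib (a b c : Formula P) :
    Tautology (imp (imp a (imp b c)) (imp (imp a b) (imp a c))) := by
  intro v hn ha; simp only [imp, hn, ha]; cases v a <;> cases v b <;> cases v c <;> rfl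

theorem imp_self (a : Formula P) : Tautology (imp a a) := by
  intro v hn ha; simp only [imp, hn, ha]; cases v a <;> rfl

theorem neg_intro (a b : Formula P) : Tautology (imp (imp a b) (imp (imp a (neg b)) (neg a))) := by
  intro v hn ha; simp only [imp, hn, ha]; cases v a <;> cases v b <;> rfl

theorem neg_neg_elim (a : Formula P) : Tautology (imp (neg (neg a)) a) := by
  intro v hn ha; simp only [imp, hn, ha]; cases v a <;> rfl

theorem and_left (a b : Formula P) : Tautology (imp (Formula.and a b) a) := by
  intro v hn ha; simp only [imp, hn, ha]; cases v a <;> cases v b <;> rfl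

theorem and_right (a b : Formula P) : Tautology (imp (Formula.and a b) b) := by
  intro v hn ha; simp only [imp, hn, ha]; cases v a <;> cases v b <;> rfl

theorem and_intro (a b : Formula P) : Tautology (imp a (imp b (Formula.and a b))) := by
  intro v hn ha; simp only [imp, hn, ha]; cases v a <;> cases v b <;> rfl

theorem top [Nonempty P] : Tautology (Formula.top P) := by
  intro v hn ha
  simp only [Formula.top, Formula.or, hn, ha]
  cases v (atom (Classical.arbitrary P)) <;> rfl

end Tautology

variable {Ax Γ Γ' : Set (Formula P)} {φ ψ : Formula P}

namespace DerivFrom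

theorem mono (hΓ : Γ ⊆ Γ') (d : DerivFrom Ax Γ φ) : DerivFrom Ax Γ' φ := by
  induction d with
  | mem h => exact .mem (hΓ h)
  | thm h => exact .thm h
  | mp _ _ ih₁ ih₂ => exact .mp ih₁ ih₂

theorem deduction (d : DerivFrom Ax (insert ψ Γ) φ) : DerivFrom Ax Γ (imp ψ φ) := by
  induction d with
  | mem h =>
    rcases h with rfl | h
    · exact .thm (.taut (.imp_self _))
    · exact .mp (.thm (.taut (.imp_intro _ _))) (.mem h)
  | thm h => exact .mp (.thm (.taut (.imp_intro _ _))) (.thm h)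
  | mp _ _ ih₁ ih₂ => exact .mp (.mp (.thm (.taut (.imp_distrib _ _ _))) ih₁) ih₂

theorem deriv_of_empty (d : DerivFrom Ax ∅ φ) : Deriv Ax φ := by
  induction d with
  | mem h => exact absurd h (notMem_empty _)
  | thm h => exact h
  | mp _ _ ih₁ ih₂ => exact .mp ih₁ ih₂

theorem exists_finite (d : DerivFrom Ax Γ φ) : ∃ Δ ⊆ Γ, Δ.Finite ∧ DerivFrom Ax Δ φ := by
  induction d with
  | @mem ψ h => exact ⟨{ψ}, singleton_subset_iff.2 h, finite_singleton ψ, .mem rfl⟩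
  | thm h => exact ⟨∅, empty_subset Γ, finite_empty, .thm h⟩
  | mp _ _ ih₁ ih₂ =>
    obtain ⟨Δ₁, h₁, f₁, d₁⟩ := ih₁
    obtain ⟨Δ₂, h₂, f₂, d₂⟩ := ih₂
    exact ⟨Δ₁ ∪ Δ₂, union_subset h₁ h₂, f₁.union f₂,
      .mp (d₁.mono subset_union_left) (d₂.mono subset_union_right)⟩

theorem neg_of_not_consistent_insert (h : ¬ Consistent Ax (insert φ Γ)) :
    DerivFrom Ax Γ (neg φ) := by
  obtain ⟨χ, d₁, d₂⟩ := not_not.1 h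
  exact .mp (.mp (.thm (.taut (.neg_intro _ _))) d₁.deduction) d₂.deduction

end DerivFrom

namespace Consistent

theorem anti (hΓ : Γ ⊆ Γ') (h : Consistent Ax Γ') : Consistent Ax Γ :=
  fun ⟨χ, d₁, d₂⟩ => h ⟨χ, d₁.mono hΓ, d₂.mono hΓ⟩

theorem insert_of_derivFrom (h : Consistent Ax Γ) (d : DerivFrom Ax Γ φ) :
    Consistent Ax (insert φ Γ) :=
  fun ⟨χ, d₁, d₂⟩ => h ⟨χ, d₁.deduction.mp d, d₂.deduction.mp d⟩

theorem isOfFiniteCharacter (Ax : Set (Formula P)) :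
    Order.IsOfFiniteCharacter {Γ | Consistent Ax Γ} := by
  refine fun Γ => ⟨fun h Δ hΔ _ => anti hΔ h, fun h ⟨χ, d₁, d₂⟩ => ?_⟩
  obtain ⟨Δ₁, h₁, f₁, d₁⟩ := d₁.exists_finite
  obtain ⟨Δ₂, h₂, f₂, d₂⟩ := d₂.exists_finite
  exact h (Δ₁ ∪ Δ₂) (union_subset h₁ h₂) (f₁.union f₂)
    ⟨χ, d₁.mono subset_union_left, d₂.mono subset_union_right⟩

end Consistent

def IsMCS (Ax s : Set (Formula P)) : Prop :=
  Maximal (Consistent Ax) s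

theorem Consistent.exists_isMCS (h : Consistent Ax Γ) : ∃ s, Γ ⊆ s ∧ IsMCS Ax s :=
  (Consistent.isOfFiniteCharacter Ax).exists_maximal h

namespace IsMCS

variable {s : Set (Formula P)}

theorem mem_of_derivFrom (hs : IsMCS Ax s) (d : DerivFrom Ax s φ) : φ ∈ s :=
  Maximal.mem_of_prop_insert hs (hs.prop.insert_of_derivFrom d)

theorem mem_of_deriv (hs : IsMCS Ax s) (d : Deriv Ax φ) : φ ∈ s :=
  hs.mem_of_derivFrom (.thm d)

theorem mem_of_imp_mem (hs : IsMCS Ax s) (h : imp φ ψ ∈ s) (hφ : φ ∈ s) : ψ ∈ s :=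
  hs.mem_of_derivFrom (.mp (.mem h) (.mem hφ))

theorem neg_mem_iff (hs : IsMCS Ax s) : neg φ ∈ s ↔ φ ∉ s := by
  refine ⟨fun hn h => hs.prop ⟨φ, .mem h, .mem hn⟩, fun h => hs.mem_of_derivFrom ?_⟩
  exact .neg_of_not_consistent_insert fun hc => h (Maximal.mem_of_prop_insert hs hc)

theorem and_mem_iff (hs : IsMCS Ax s) : Formula.and φ ψ ∈ s ↔ φ ∈ s ∧ ψ ∈ s := by
  refine ⟨fun h => ⟨?_, ?_⟩, fun ⟨hφ, hψ⟩ => ?_⟩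
  · exact hs.mem_of_imp_mem (hs.mem_of_deriv (.taut (.and_left _ _))) h
  · exact hs.mem_of_imp_mem (hs.mem_of_deriv (.taut (.and_right _ _))) h
  · exact hs.mem_of_imp_mem (hs.mem_of_imp_mem (hs.mem_of_deriv (.taut (.and_intro _ _))) hφ) hψ

theorem imp_mem_iff (hs : IsMCS Ax s) : imp φ ψ ∈ s ↔ (φ ∈ s → ψ ∈ s) := by
  simp only [imp, hs.neg_mem_iff, hs.and_mem_iff]
  tauto

theorem or_mem_iff (hs : IsMCS Ax s) : Formula.or φ ψ ∈ s ↔ φ ∈ s ∨ ψ ∈ s := by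
  simp only [Formula.or, hs.neg_mem_iff, hs.and_mem_iff]
  tauto

theorem iffF_mem_iff (hs : IsMCS Ax s) : iffF φ ψ ∈ s ↔ (φ ∈ s ↔ ψ ∈ s) := by
  simp only [iffF, hs.and_mem_iff, hs.imp_mem_iff, iff_def]

end IsMCS

theorem deriv_of_forall_isMCS (h : ∀ s, IsMCS Ax s → φ ∈ s) : Deriv Ax φ := by
  by_cases hc : Consistent Ax (insert (neg φ) ∅)
  · obtain ⟨s, hsub, hs⟩ := hc.exists_isMCS
    exact absurd (h s hs) (hs.neg_mem_iff.1 (hsub (mem_insert _ _)))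
  · exact .mp (.taut (.neg_neg_elim _)) (DerivFrom.neg_of_not_consistent_insert hc).deriv_of_empty

theorem IsMCS.delta_mem_congr {s : Set (Formula P)} (hs : IsMCS Ax s)
    (h : ∀ u, IsMCS Ax u → (φ ∈ u ↔ ψ ∈ u)) : delta φ ∈ s ↔ delta ψ ∈ s :=
  hs.iffF_mem_iff.1 <| hs.mem_of_deriv <| .re <|
    deriv_of_forall_isMCS fun u hu => hu.iffF_mem_iff.2 (h u hu)

section Supplementation

variable {S : Type} {N : S → Set (Set S)}

theorem supersetClosed_suppN (N : S → Set (Set S)) : SupersetClosed (suppN N) :=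
  fun _ _ _ ⟨Z, hZ, hZX⟩ hXY => ⟨Z, hZ, hZX.trans hXY⟩

theorem containsUnit_suppN (h : ∀ s, (N s).Nonempty) : ContainsUnit (suppN N) :=
  fun s => let ⟨X, hX⟩ := h s; ⟨X, hX, subset_univ X⟩

theorem interClosed_suppN (h : InterClosed N) : InterClosed (suppN N) :=
  fun s _ _ ⟨X, hX, hXX'⟩ ⟨Y, hY, hYY'⟩ => ⟨X ∩ Y, h s X Y hX hY, inter_subset_inter hXX' hYY'⟩

end Supplementation

namespace Canonical

def necessities (s : Set (Formula P)) : Set (Formula P) :=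
  {φ | ∀ ψ, delta (Formula.or φ ψ) ∈ s}

variable (Ax)

def State : Type := {s : Set (Formula P) // IsMCS Ax s}

def proofSet (φ : Formula P) : Set (State Ax) := {t | φ ∈ t.1}

def nbhd : State Ax → Set (Set (State Ax)) :=
  suppN fun t => proofSet Ax '' necessities t.1

def model (hne : Nonempty (State Ax)) : NbhdModel P :=
  ⟨State Ax, hne, nbhd Ax, fun p => proofSet Ax (atom p)⟩

variable {Ax} {s : Set (Formula P)}

theorem proofSet_neg : proofSet Ax (neg φ) = (proofSet Ax φ)ᶜ :=
  ext fun t => t.2.neg_mem_iff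

theorem proofSet_and : proofSet Ax (Formula.and φ ψ) = proofSet Ax φ ∩ proofSet Ax ψ :=
  ext fun t => t.2.and_mem_iff

theorem mem_necessities_of_proofSet_subset {χ : Formula P} (hs : IsMCS Ax s)
    (h : proofSet Ax φ ⊆ proofSet Ax χ) (hφ : φ ∈ necessities s) : χ ∈ necessities s := by
  refine fun ψ => (hs.delta_mem_congr fun u hu => ?_).1 (hφ (Formula.or χ ψ))
  have hφχ : φ ∈ u → χ ∈ u := @h ⟨u, hu⟩
  simp only [hu.or_mem_iff]
  tauto

theorem proofSet_mem_nbhd_iff (t : State Ax) : proofSet Ax φ ∈ nbhd Ax t ↔ φ ∈ necessities t.1 :=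
  ⟨fun ⟨_, ⟨_, hψ, rfl⟩, hsub⟩ => mem_necessities_of_proofSet_subset t.2 hsub hψ,
    fun h => ⟨_, ⟨φ, h, rfl⟩, subset_rfl⟩⟩

theorem delta_mem_of_mem_necessities (hs : IsMCS Ax s) (h : φ ∈ necessities s) : delta φ ∈ s :=
  (hs.delta_mem_congr fun u hu => by rw [hu.or_mem_iff, or_self]).1 (h φ)

theorem delta_mem_iff (hM : AxDeltaM ⊆ Ax) (hs : IsMCS Ax s) :
    delta φ ∈ s ↔ φ ∈ necessities s ∨ neg φ ∈ necessities s := by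
  refine ⟨fun h => or_iff_not_imp_left.2 fun hφ χ => ?_, ?_⟩
  · obtain ⟨ψ, hψ⟩ := not_forall.1 hφ
    have hax := hs.mem_of_deriv (.ax (hM ⟨φ, ψ, χ, rfl⟩))
    exact (hs.or_mem_iff.1 (hs.mem_of_imp_mem hax h)).resolve_left hψ
  · rintro (h | h)
    · exact delta_mem_of_mem_necessities hs h
    · exact (hs.iffF_mem_iff.1 (hs.mem_of_deriv (.equ φ))).2 (delta_mem_of_mem_necessities hs h)

theorem truthSet_model (hM : AxDeltaM ⊆ Ax) (hne : Nonempty (State Ax)) (φ : Formula P) :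
    (model Ax hne).truthSet φ = proofSet Ax φ := by
  induction φ with
  | atom p => rfl
  | neg φ ih => rw [NbhdModel.truthSet, ih]; exact proofSet_neg.symm
  | and φ ψ ih₁ ih₂ => rw [NbhdModel.truthSet, ih₁, ih₂]; exact proofSet_and.symm
  | delta φ ih =>
    ext (t : State Ax)
    change (model Ax hne).truthSet φ ∈ nbhd Ax t ∨ ((model Ax hne).truthSet φ)ᶜ ∈ nbhd Ax t ↔
      delta φ ∈ t.1
    rw [ih]
    change proofSet Ax φ ∈ nbhd Ax t ∨ (proofSet Ax φ)ᶜ ∈ nbhd Ax t ↔ delta φ ∈ t.1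
    rw [← proofSet_neg, proofSet_mem_nbhd_iff, proofSet_mem_nbhd_iff]
    exact (delta_mem_iff hM t.2).symm

theorem top_mem_necessities [Nonempty P] (hN : AxDeltaN P ⊆ Ax) (hs : IsMCS Ax s) :
    Formula.top P ∈ necessities s := fun ψ =>
  (hs.delta_mem_congr fun u hu => by simp [hu.or_mem_iff, hu.mem_of_deriv (.taut .top)]).2
    (hs.mem_of_deriv (.ax (hN rfl)))

theorem and_mem_necessities (hC : AxDeltaC ⊆ Ax) (hs : IsMCS Ax s) (hφ : φ ∈ necessities s)
    (hψ : ψ ∈ necessities s) : Formula.and φ ψ ∈ necessities s := fun ρ => by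
  have hax := hs.mem_of_deriv (.ax (hC ⟨Formula.or φ ρ, Formula.or ψ ρ, rfl⟩))
  refine (hs.delta_mem_congr fun u hu => ?_).1 (hs.mem_of_imp_mem hax ?_)
  · simp only [hu.or_mem_iff, hu.and_mem_iff]
    tauto
  · exact hs.and_mem_iff.2 ⟨hφ ρ, hψ ρ⟩

theorem supersetClosed_nbhd : SupersetClosed (nbhd Ax) :=
  supersetClosed_suppN _

theorem containsUnit_nbhd [Nonempty P] (hN : AxDeltaN P ⊆ Ax) : ContainsUnit (nbhd Ax) :=
  containsUnit_suppN fun t => ⟨_, _, top_mem_necessities hN t.2, rfl⟩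

theorem interClosed_nbhd (hC : AxDeltaC ⊆ Ax) : InterClosed (nbhd Ax) := by
  refine interClosed_suppN ?_
  rintro t _ _ ⟨φ, hφ, rfl⟩ ⟨ψ, hψ, rfl⟩
  exact ⟨_, and_mem_necessities hC t.2 hφ hψ, proofSet_and⟩

theorem exists_sat_of_consistent (hM : AxDeltaM ⊆ Ax) (hΓ : Consistent Ax Γ) :
    ∃ (hne : Nonempty (State Ax)) (t : State Ax), ∀ φ ∈ Γ, (model Ax hne).sat t φ := by
  obtain ⟨s, hΓs, hs⟩ := hΓ.exists_isMCS
  refine ⟨⟨⟨s, hs⟩⟩, ⟨s, hs⟩, fun φ hφ => ?_⟩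
  change _ ∈ (model Ax _).truthSet φ
  rw [truthSet_model hM]
  exact hΓs hφ

end Canonical

end

/-- the minimal contingency logic K^Δ = E^Δ + ΔM + ΔC + ΔN is strongly
complete with respect to the class of filters, i.e. (mcn)-frames; likewise
EMN^Δ = E^Δ + ΔM + ΔN is strongly complete with respect to the class of (mn)-frames. -/
theorem K_and_EMN_strongly_complete {P : Type} [Nonempty P] :
    (∀ Γ : Set (Formula P), Consistent (AxDeltaM ∪ AxDeltaC ∪ AxDeltaN P) Γ →
      ∃ (M : NbhdModel P) (s : M.S),
        SupersetClosed M.N ∧ InterClosed M.N ∧ ContainsUnit M.N ∧ ∀ φ ∈ Γ, M.sat s φ) ∧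
    (∀ Γ : Set (Formula P), Consistent (AxDeltaM ∪ AxDeltaN P) Γ →
      ∃ (M : NbhdModel P) (s : M.S),
        SupersetClosed M.N ∧ ContainsUnit M.N ∧ ∀ φ ∈ Γ, M.sat s φ) := by
  refine ⟨fun Γ hΓ => ?_, fun Γ hΓ => ?_⟩
  · obtain ⟨hne, t, hsat⟩ := Canonical.exists_sat_of_consistent (fun _ h => .inl (.inl h)) hΓ
    exact ⟨Canonical.model _ hne, t, Canonical.supersetClosed_nbhd,
      Canonical.interClosed_nbhd fun _ h => .inl (.inr h),
      Canonical.containsUnit_nbhd fun _ h => .inr h, hsat⟩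
  · obtain ⟨hne, t, hsat⟩ := Canonical.exists_sat_of_consistent (fun _ h => .inl h) hΓ
    exact ⟨Canonical.model _ hne, t, Canonical.supersetClosed_nbhd,
      Canonical.containsUnit_nbhd fun _ h => .inr h, hsat⟩
end

section
/- Equality of Kuhn's and Humberstone's functions λ: let Λ be any proof system of contingency logic containing all propositional tautologies, closed under modus ponens and under the rule REΔ (from φ ↔ ψ infer Δφ ↔ Δψ), and let x be a maximal Λ-consistent set of formulas. Then for any formula φ, the following are equivalent: (1) for every formula ψ such that ⊢_Λ φ → ψ, we have Δψ ∈ x; (2) for every formula ψ, we have Δ(φ ∨ ψ) ∈ x. -/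
/-- A proof system of contingency logic, given by its set of theorems: it contains all
propositional tautologies and is closed under modus ponens and the rule REΔ. -/
structure Sys (P : Type) where
  thm : Set (Formula P)
  taut : ∀ φ : Formula P, Tautology φ → φ ∈ thm
  mp : ∀ φ ψ : Formula P, Formula.imp φ ψ ∈ thm → φ ∈ thm → ψ ∈ thm
  re : ∀ φ ψ : Formula P, Formula.iffF φ ψ ∈ thm →
         Formula.iffF (Formula.delta φ) (Formula.delta ψ) ∈ thm

/-- The system contains the axiom ΔEqu: Δφ ↔ Δ¬φ. -/
def HasDeltaEqu {P : Type} (Λ : Sys P) : Prop :=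
  ∀ φ : Formula P,
    Formula.iffF (Formula.delta φ) (Formula.delta (Formula.neg φ)) ∈ Λ.thm

/-- The system contains the axiom ΔM: Δφ → Δ(φ ∨ ψ) ∨ Δ(¬φ ∨ χ). -/
def HasDeltaM {P : Type} (Λ : Sys P) : Prop :=
  ∀ φ ψ χ : Formula P,
    Formula.imp (Formula.delta φ)
      (Formula.or (Formula.delta (Formula.or φ ψ))
                  (Formula.delta (Formula.or (Formula.neg φ) χ))) ∈ Λ.thm

/-- The system contains the axiom ΔC: (Δφ ∧ Δψ) → Δ(φ ∧ ψ). -/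
def HasDeltaC {P : Type} (Λ : Sys P) : Prop :=
  ∀ φ ψ : Formula P,
    Formula.imp (Formula.and (Formula.delta φ) (Formula.delta ψ))
      (Formula.delta (Formula.and φ ψ)) ∈ Λ.thm

/-- Derivability of `φ` from premises `Γ` in the system `Λ`. -/
inductive SDerivFrom {P : Type} (Λ : Sys P) (Γ : Set (Formula P)) : Formula P → Prop
  | mem {φ} (h : φ ∈ Γ) : SDerivFrom Λ Γ φ
  | thm {φ} (h : φ ∈ Λ.thm) : SDerivFrom Λ Γ φ
  | mp {φ ψ} (h1 : SDerivFrom Λ Γ (Formula.imp φ ψ)) (h2 : SDerivFrom Λ Γ φ) :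
      SDerivFrom Λ Γ ψ

/-- `Γ` is Λ-consistent. -/
def SConsistent {P : Type} (Λ : Sys P) (Γ : Set (Formula P)) : Prop :=
  ¬ ∃ φ : Formula P, SDerivFrom Λ Γ φ ∧ SDerivFrom Λ Γ (Formula.neg φ)

/-- `s` is a maximal Λ-consistent set of formulas. -/
def MCS {P : Type} (Λ : Sys P) (s : Set (Formula P)) : Prop :=
  SConsistent Λ s ∧ ∀ φ : Formula P, φ ∈ s ∨ Formula.neg φ ∈ s

/-- The proof set |φ| = {s ∈ S^Λ : φ ∈ s}, where S^Λ is the set of maximal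
Λ-consistent sets. -/
def proofSet {P : Type} (Λ : Sys P) (φ : Formula P) :
    Set {s : Set (Formula P) // MCS Λ s} :=
  {s | φ ∈ s.val}

/-- The neighborhood function of the minimal canonical model:
N₀^Λ(s) = { |φ| : Δ(φ ∨ ψ) ∈ s for every formula ψ }. -/
def minN {P : Type} (Λ : Sys P) (s : {s : Set (Formula P) // MCS Λ s}) :
    Set (Set {s : Set (Formula P) // MCS Λ s}) :=
  {X | ∃ φ : Formula P,
     X = proofSet Λ φ ∧ ∀ ψ : Formula P, Formula.delta (Formula.or φ ψ) ∈ s.val}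

lemma taut_imp_or {P : Type} (φ ψ : Formula P) :
    Tautology (Formula.imp φ (Formula.or φ ψ)) := by
  intro v hn ha
  simp only [Formula.imp, Formula.or, hn, ha]
  cases v φ <;> cases v ψ <;> rfl

lemma taut_imp_iff_or {P : Type} (φ ψ : Formula P) :
    Tautology (Formula.imp (Formula.imp φ ψ)
      (Formula.iffF (Formula.or φ ψ) ψ)) := by
  intro v hn ha
  simp only [Formula.imp, Formula.or, Formula.iffF, hn, ha]
  cases v φ <;> cases v ψ <;> rfl

lemma taut_and_left {P : Type} (φ ψ : Formula P) :
    Tautology (Formula.imp (Formula.and φ ψ) φ) := by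
  intro v hn ha
  simp only [Formula.imp, hn, ha]
  cases v φ <;> cases v ψ <;> rfl

lemma mcs_mp {P : Type} (Λ : Sys P) {x : Set (Formula P)} (hx : MCS Λ x)
    {a b : Formula P} (hab : Formula.imp a b ∈ Λ.thm) (ha : a ∈ x) : b ∈ x := by
  rcases hx.2 b with hb | hnb
  · exact hb
  · exact absurd ⟨b, .mp (.thm hab) (.mem ha), .mem hnb⟩ hx.1

/-- equality of Kuhn's and Humberstone's functions λ: for any proof
system Λ containing all propositional tautologies and closed under modus ponens and
REΔ, any maximal Λ-consistent set x and any formula φ, the following are equivalent: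
(1) for every ψ with ⊢_Λ φ → ψ we have Δψ ∈ x; (2) for every ψ, Δ(φ ∨ ψ) ∈ x. -/
theorem kuhn_lambda_eq_humberstone_lambda {P : Type} (Λ : Sys P)
    (x : Set (Formula P)) (hx : MCS Λ x) (φ : Formula P) :
    (∀ ψ : Formula P, Formula.imp φ ψ ∈ Λ.thm → Formula.delta ψ ∈ x) ↔
    (∀ ψ : Formula P, Formula.delta (Formula.or φ ψ) ∈ x) := by
  constructor
  · intro h ψ
    exact h _ (Λ.taut _ (taut_imp_or φ ψ))
  · intro h ψ himp
    have hiff : Formula.iffF (Formula.or φ ψ) ψ ∈ Λ.thm :=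
      Λ.mp _ _ (Λ.taut _ (taut_imp_iff_or φ ψ)) himp
    have hdiff := Λ.re _ _ hiff
    have hd : Formula.imp (Formula.delta (Formula.or φ ψ)) (Formula.delta ψ) ∈ Λ.thm :=
      Λ.mp _ _ (Λ.taut _ (taut_and_left _ _)) hdiff
    exact mcs_mp Λ hx hd (h ψ)
end
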